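/- For every natural number k ≥ 1, let n = 4k+2 and let g : {0,1}^n → {0,1} be the pattern function: g(x) = 1 iff there exists j ∈ [2k+1] such that x satisfies pattern P_j, where P_j requires x_{2j-1} = x_{2j} = 1 and, for all i ∈ [k], x_{2j+2i} = 0 and x_{2j-2i-1} = x_{2j-2i} = 0 (all indices taken modulo n). Then the 0-block-sensitivity of g equals 2k+1, i.e., bs_0(g) = n/2 = 2k+1. -/

import Mathlib

/-!
The pattern function is a DNF whose `2k+1` terms are the patterns `P_j`. At an input `x` with
`g x = 0`, two disjoint sensitive blocks cannot switch on the same term: a literal that holds after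
flipping either of two disjoint blocks already holds at `x`, so `x` would satisfy that term.
Hence `bs(g, x) ≤ 2k+1`. At `x = 0` the blocks `{2j-1, 2j}` are disjoint, and flipping one of them
yields exactly the ones of `P_j`: every other coordinate that `P_j` fixes lies in the same window
of `n` consecutive indices and therefore differs from `2j-1` and `2j` modulo `n`.
-/

section Defs

variable {ι : Type} [Fintype ι] [DecidableEq ι]

/-- `flipBit x i` is `x` with its `i`-th bit flipped. -/
def flipBit (x : ι → Bool) (i : ι) : ι → Bool :=
  Function.update x i (!x i)

/-- `flipBlock x B` is `x` with all bits indexed by `B` flipped. -/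
def flipBlock (x : ι → Bool) (B : Finset ι) : ι → Bool :=
  fun j => if j ∈ B then !x j else x j

/-- The sensitivity of `f` at `x`: the number of `i` with `f (x^(i)) ≠ f x`. -/
def sensAt (f : (ι → Bool) → Bool) (x : ι → Bool) : ℕ :=
  (Finset.univ.filter fun i => f (flipBit x i) ≠ f x).card

/-- The sensitivity `s(f) = max_x s(f,x)`. -/
def sens (f : (ι → Bool) → Bool) : ℕ :=
  Finset.univ.sup (sensAt f)

/-- The 0-sensitivity `s₀(f) = max_{x : f x = 0} s(f,x)`. -/
def sens0 (f : (ι → Bool) → Bool) : ℕ :=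
  (Finset.univ.filter fun x => f x = false).sup (sensAt f)

/-- The 1-sensitivity `s₁(f) = max_{x : f x = 1} s(f,x)`. -/
def sens1 (f : (ι → Bool) → Bool) : ℕ :=
  (Finset.univ.filter fun x => f x = true).sup (sensAt f)

/-- The block sensitivity of `f` at `x`: the largest `b` such that there are
`b` pairwise disjoint blocks on which flipping `x` changes the value of `f`. -/
noncomputable def bsAt (f : (ι → Bool) → Bool) (x : ι → Bool) : ℕ :=
  sSup {b : ℕ | ∃ Bl : Fin b → Finset ι,
    (Pairwise fun p q => Disjoint (Bl p) (Bl q)) ∧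
    ∀ p, f (flipBlock x (Bl p)) ≠ f x}

/-- The block sensitivity `bs(f) = max_x bs(f,x)`. -/
noncomputable def bs (f : (ι → Bool) → Bool) : ℕ :=
  Finset.univ.sup (bsAt f)

/-- The 0-block-sensitivity `bs₀(f) = max_{x : f x = 0} bs(f,x)`. -/
noncomputable def bs0 (f : (ι → Bool) → Bool) : ℕ :=
  (Finset.univ.filter fun x => f x = false).sup (bsAt f)

end Defs

/-- The coordinate of `{0,1}^{4k+2}` with (1-based) index `t`, taken modulo `4k+2`. -/
def pidx (k : ℕ) (t : ℤ) : Fin (4*k+2) :=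
  ⟨(t % (4*(k:ℤ)+2)).toNat, by
    have h0 : (0:ℤ) < 4*(k:ℤ)+2 := by positivity
    have h1 := Int.emod_nonneg t (ne_of_gt h0)
    have h2 := Int.emod_lt_of_pos t h0
    omega⟩

/-- `x` satisfies the pattern `P_j`: `x_{2j-1} = x_{2j} = 1` and, for all `i ∈ [k]`,
`x_{2j+2i} = 0` and `x_{2j-2i-1} = x_{2j-2i} = 0`, indices taken modulo `4k+2`. -/
def SatPat (k : ℕ) (j : ℤ) (x : Fin (4*k+2) → Bool) : Prop :=
  x (pidx k (2*j-1)) = true ∧ x (pidx k (2*j)) = true ∧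
  ∀ i : ℤ, 1 ≤ i → i ≤ (k:ℤ) →
    x (pidx k (2*j+2*i)) = false ∧
    x (pidx k (2*j-2*i-1)) = false ∧
    x (pidx k (2*j-2*i)) = false

section BlockSensitivity

variable {ι : Type} [DecidableEq ι]

@[simp]
lemma flipBlock_empty (x : ι → Bool) : flipBlock x ∅ = x := by
  ext j
  simp [flipBlock]

lemma flipBlock_false (B : Finset ι) :
    flipBlock (fun _ => false) B = fun j => decide (j ∈ B) := by
  ext j
  by_cases hj : j ∈ B <;> simp [flipBlock, hj]

lemma le_card_of_sensitive_blocks [Fintype ι] {f : (ι → Bool) → Bool} {x : ι → Bool}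
    {b : ℕ} (Bl : Fin b → Finset ι) (hdisj : Pairwise fun p q => Disjoint (Bl p) (Bl q))
    (hsens : ∀ p, f (flipBlock x (Bl p)) ≠ f x) : b ≤ Fintype.card ι := by
  have hne : ∀ p, (Bl p).Nonempty := fun p =>
    Finset.nonempty_iff_ne_empty.mpr fun h => hsens p (by rw [h, flipBlock_empty])
  calc b = ∑ _p : Fin b, 1 := by simp
    _ ≤ ∑ p, (Bl p).card := Finset.sum_le_sum fun p _ => (hne p).card_pos
    _ = (Finset.univ.biUnion Bl).card :=
        (Finset.card_biUnion fun p _ q _ hpq => hdisj hpq).symm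
    _ ≤ Fintype.card ι := Finset.card_le_univ _

lemma le_bsAt [Fintype ι] {f : (ι → Bool) → Bool} {x : ι → Bool} {b : ℕ}
    (Bl : Fin b → Finset ι) (hdisj : Pairwise fun p q => Disjoint (Bl p) (Bl q))
    (hsens : ∀ p, f (flipBlock x (Bl p)) ≠ f x) : b ≤ bsAt f x :=
  le_csSup ⟨Fintype.card ι, fun _ ⟨Bl, hdisj, hsens⟩ =>
    le_card_of_sensitive_blocks Bl hdisj hsens⟩ ⟨Bl, hdisj, hsens⟩

lemma bsAt_le {f : (ι → Bool) → Bool} {x : ι → Bool} {m : ℕ}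
    (h : ∀ b (Bl : Fin b → Finset ι), (Pairwise fun p q => Disjoint (Bl p) (Bl q)) →
      (∀ p, f (flipBlock x (Bl p)) ≠ f x) → b ≤ m) : bsAt f x ≤ m :=
  csSup_le ⟨0, Fin.elim0, fun p => p.elim0, fun p => p.elim0⟩
    fun b ⟨Bl, hdisj, hsens⟩ => h b Bl hdisj hsens

lemma bsAt_le_bs0 [Fintype ι] {f : (ι → Bool) → Bool} {x : ι → Bool} (hx : f x = false) :
    bsAt f x ≤ bs0 f :=
  Finset.le_sup (Finset.mem_filter.mpr ⟨Finset.mem_univ x, hx⟩)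

lemma bs0_le [Fintype ι] {f : (ι → Bool) → Bool} {m : ℕ} (h : ∀ x, f x = false → bsAt f x ≤ m) :
    bs0 f ≤ m :=
  Finset.sup_le fun x hx => h x (Finset.mem_filter.mp hx).2

lemma eq_of_flipBlock_eq_of_disjoint {x : ι → Bool} {B₁ B₂ : Finset ι} (hB : Disjoint B₁ B₂)
    {i : ι} {v : Bool} (h₁ : flipBlock x B₁ i = v) (h₂ : flipBlock x B₂ i = v) : x i = v := by
  by_cases hi : i ∈ B₁
  · simpa [flipBlock, Finset.disjoint_left.mp hB hi] using h₂
  · simpa [flipBlock, hi] using h₁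

theorem bsAt_le_card_of_dnf {κ : Type} (J : Finset κ) (T : κ → Finset (ι × Bool))
    {f : (ι → Bool) → Bool} (hf : ∀ y, f y = true ↔ ∃ j ∈ J, ∀ l ∈ T j, y l.1 = l.2)
    {x : ι → Bool} (hx : f x = false) : bsAt f x ≤ J.card := by
  refine bsAt_le fun b Bl hdisj hsens => ?_
  have hterm : ∀ p, ∃ j ∈ J, ∀ l ∈ T j, flipBlock x (Bl p) l.1 = l.2 := fun p =>
    (hf _).mp (by simpa [hx] using hsens p)
  choose F hFJ hFsat using hterm
  have hinj : Set.InjOn F (Finset.univ : Finset (Fin b)) := by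
    intro p _ q _ hpq
    by_contra hne
    have hsat : ∀ l ∈ T (F q), x l.1 = l.2 := fun l hl =>
      eq_of_flipBlock_eq_of_disjoint (hdisj hne) (hFsat p l (hpq ▸ hl)) (hFsat q l hl)
    simp [(hf x).mpr ⟨F q, hFJ q, hsat⟩] at hx
  simpa using Finset.card_le_card_of_injOn F (fun p _ => hFJ p) hinj

end BlockSensitivity

section Pattern

lemma pidx_eq_pidx_iff (k : ℕ) (s t : ℤ) :
    pidx k s = pidx k t ↔ s % (4 * k + 2) = t % (4 * k + 2) := by
  have hN : (4 * k + 2 : ℤ) ≠ 0 := by positivity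
  have hs := Int.emod_nonneg s hN
  have ht := Int.emod_nonneg t hN
  rw [Fin.ext_iff, pidx, pidx, Fin.val_mk, Fin.val_mk]
  omega

lemma pidx_injOn (k : ℕ) (a : ℤ) : Set.InjOn (pidx k) (Set.Ico a (a + (4 * k + 2))) := by
  intro s ⟨hs₁, hs₂⟩ t ⟨ht₁, ht₂⟩ hst
  have hdvd : (4 * k + 2 : ℤ) ∣ t - s := Int.ModEq.dvd ((pidx_eq_pidx_iff k s t).mp hst)
  have := Int.eq_zero_of_abs_lt_dvd hdvd (abs_sub_lt_iff.mpr ⟨by omega, by omega⟩)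
  omega

/-- `P_j` as a conjunction of literals, `(i, b)` standing for `x_i = b`. -/
noncomputable def patternTerm (k : ℕ) (j : ℤ) : Finset (Fin (4 * k + 2) × Bool) :=
  {(pidx k (2 * j - 1), true), (pidx k (2 * j), true)} ∪
    (Finset.Icc 1 (k : ℤ)).biUnion fun i =>
      {(pidx k (2 * j + 2 * i), false), (pidx k (2 * j - 2 * i - 1), false),
        (pidx k (2 * j - 2 * i), false)}

lemma satPat_iff (k : ℕ) (j : ℤ) (x : Fin (4 * k + 2) → Bool) :
    SatPat k j x ↔ ∀ l ∈ patternTerm k j, x l.1 = l.2 := by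
  simp only [SatPat, patternTerm, Finset.forall_mem_union, Finset.forall_mem_insert,
    Finset.mem_biUnion, Finset.mem_Icc, Finset.mem_singleton, forall_exists_index, and_imp,
    forall_eq, and_assoc]
  refine and_congr_right fun _ => and_congr_right fun _ =>
    ⟨fun h l i hi hik hl => ?_, fun h i hi hik =>
      ⟨h _ i hi hik (Finset.mem_insert_self _ _),
        h _ i hi hik (Finset.mem_insert_of_mem (Finset.mem_insert_self _ _)),
        h _ i hi hik (Finset.mem_insert_of_mem (Finset.mem_insert_of_mem
          (Finset.mem_singleton_self _)))⟩⟩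
  simp only [Finset.mem_insert, Finset.mem_singleton] at hl
  rcases hl with rfl | rfl | rfl <;> simp [h i hi hik]

def patternBlock (k : ℕ) (j : ℤ) : Finset (Fin (4 * k + 2)) :=
  {pidx k (2 * j - 1), pidx k (2 * j)}

lemma satPat_patternBlock (k : ℕ) (j : ℤ) :
    SatPat k j fun c => decide (c ∈ patternBlock k j) := by
  have hinj := pidx_injOn k (2 * j - 2 * k - 1)
  have hzero : ∀ t, 2 * j - 2 * k - 1 ≤ t → t ≤ 2 * j + 2 * k → t ≠ 2 * j - 1 → t ≠ 2 * j →
      decide (pidx k t ∈ patternBlock k j) = false := by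
    intro t ht₁ ht₂ ht₃ ht₄
    simp only [patternBlock, Finset.mem_insert, Finset.mem_singleton, decide_eq_false_iff_not,
      not_or]
    exact ⟨fun h => ht₃ (hinj ⟨ht₁, by omega⟩ ⟨by omega, by omega⟩ h),
      fun h => ht₄ (hinj ⟨ht₁, by omega⟩ ⟨by omega, by omega⟩ h)⟩
  refine ⟨by simp [patternBlock], by simp [patternBlock], fun i hi hik => ?_⟩
  exact ⟨hzero _ (by omega) (by omega) (by omega) (by omega),
    hzero _ (by omega) (by omega) (by omega) (by omega),
    hzero _ (by omega) (by omega) (by omega) (by omega)⟩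

lemma disjoint_patternBlock {k : ℕ} {j j' : ℤ} (hj : 1 ≤ j ∧ j ≤ 2 * k + 1)
    (hj' : 1 ≤ j' ∧ j' ≤ 2 * k + 1) (hne : j ≠ j') :
    Disjoint (patternBlock k j) (patternBlock k j') := by
  have hinj := pidx_injOn k 1
  rw [Finset.disjoint_left]
  intro c hc hc'
  simp only [patternBlock, Finset.mem_insert, Finset.mem_singleton] at hc hc'
  rcases hc with rfl | rfl <;> rcases hc' with h | h <;>
    exact absurd (hinj ⟨by omega, by omega⟩ ⟨by omega, by omega⟩ h) (by omega)

end Pattern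

theorem bs0_pattern_function_general (k : ℕ)
    (g : (Fin (4*k+2) → Bool) → Bool)
    (hg : ∀ x, g x = true ↔ ∃ j : ℤ, 1 ≤ j ∧ j ≤ 2*(k:ℤ)+1 ∧ SatPat k j x) :
    bs0 g = 2*k+1 := by
  have hdnf : ∀ x, g x = true ↔
      ∃ j ∈ Finset.Icc (1 : ℤ) (2 * k + 1), ∀ l ∈ patternTerm k j, x l.1 = l.2 := by
    simp only [hg, Finset.mem_Icc, satPat_iff, and_assoc, implies_true]
  have hcard : (Finset.Icc (1 : ℤ) (2 * k + 1)).card = 2 * k + 1 := by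
    rw [Int.card_Icc]
    omega
  have hzero : g (fun _ => false) = false := by
    rw [← Bool.not_eq_true, hg]
    rintro ⟨j, -, -, hone, -⟩
    exact Bool.false_ne_true hone
  refine le_antisymm (bs0_le fun x hx => hcard ▸ bsAt_le_card_of_dnf _ _ hdnf hx) ?_
  refine le_trans ?_ (bsAt_le_bs0 hzero)
  refine le_bsAt (fun p : Fin (2 * k + 1) => patternBlock k (p + 1)) ?_ ?_
  · intro p q hpq
    exact disjoint_patternBlock (by omega) (by omega) (by simpa [Fin.val_eq_val] using hpq)
  · intro p
    rw [hzero, flipBlock_false, Ne, Bool.not_eq_false, hg]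
    exact ⟨p + 1, by omega, by omega, satPat_patternBlock k _⟩

/-- For `k ≥ 1`, the pattern function `g` on `{0,1}^{4k+2}` (with `g x = 1` iff `x`
satisfies some pattern `P_j`, `j ∈ [2k+1]`) has 0-block-sensitivity `bs₀(g) = 2k+1`. -/
theorem bs0_pattern_function (k : ℕ) (hk : 1 ≤ k)
    (g : (Fin (4*k+2) → Bool) → Bool)
    (hg : ∀ x, g x = true ↔ ∃ j : ℤ, 1 ≤ j ∧ j ≤ 2*(k:ℤ)+1 ∧ SatPat k j x) :
    bs0 g = 2*k+1 :=
  bs0_pattern_function_general k g hg
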